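/- Let G be a grid graph on n vertices (vertex set V ⊆ ℤ², edges between vertices at Euclidean distance 1). G admits a partition of its vertex set into induced paths on three vertices if and only if the point set V can be identified by 2n/3 disks of radius 1/2. -/

import Mathlib

noncomputable section

/-- The Euclidean plane. -/
abbrev Pt : Type := EuclideanSpace ℝ (Fin 2)

instance : DecidableEq Pt := Classical.decEq _

/-- A disk: a closed Euclidean ball with nonnegative radius. -/
def IsDisk (D : Set Pt) : Prop :=
  ∃ (c : Pt) (r : ℝ), 0 ≤ r ∧ D = Metric.closedBall c r

/-- A family of disks identifies a finite point set: every point is covered and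
every pair of distinct points is separated by some disk. -/
def Identifies (𝒟 : Finset (Set Pt)) (P : Finset Pt) : Prop :=
  (∀ p ∈ P, ∃ D ∈ 𝒟, p ∈ D) ∧
  (∀ p ∈ P, ∀ q ∈ P, p ≠ q → ∃ D ∈ 𝒟, (p ∈ D ∧ q ∉ D) ∨ (q ∈ D ∧ p ∉ D))

/-- Minimum number of disks needed to identify `P`. -/
def gammaID (P : Finset Pt) : ℕ :=
  sInf {k | ∃ 𝒟 : Finset (Set Pt), 𝒟.card = k ∧ (∀ D ∈ 𝒟, IsDisk D) ∧ Identifies 𝒟 P}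

/-- Adjacency in a grid graph: integer points at Euclidean distance 1. -/
def GridAdj (a b : ℤ × ℤ) : Prop := (a.1 - b.1) ^ 2 + (a.2 - b.2) ^ 2 = 1

/-- Embedding of integer points into the plane. -/
def embZ (a : ℤ × ℤ) : Pt := WithLp.toLp 2 ![(a.1 : ℝ), (a.2 : ℝ)]

/-!
A disk of radius `1/2` meets `ℤ²` in a clique of the grid graph, and the grid graph is
triangle-free, so each disk contains at most two lattice points.

Given a `P₃`-partition, the two disks centred at the midpoints of the edges of each path
identify `V`: they give the ends of a path distinct singleton signatures and the middle the
pair of both.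

Conversely, let `k` disks identify `n` points, and call a point lonely if it lies in exactly
one disk. Lonely points have pairwise distinct singleton signatures, so there are at most `k`
of them, and double counting incidences gives `2n - k ≤ ∑ₚ |sig p| = ∑_D |D ∩ V| ≤ 2k`.
When `3k ≤ 2n` all these inequalities are equalities: every disk holds exactly two points, one
of them lonely and the other a branch point lying in exactly two disks. Each branch point
together with the lonely points of its two disks is an induced `P₃`, and these paths partition
`V`.
-/

open Finset Metric

section P3Partition

variable {ι : Type*}

def IsP3Partition (G : SimpleGraph ι) (V : Finset ι) (T : Finset (ι × ι × ι)) : Prop :=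
  (∀ t ∈ T, t.1 ∈ V ∧ t.2.1 ∈ V ∧ t.2.2 ∈ V ∧
    G.Adj t.1 t.2.1 ∧ G.Adj t.2.1 t.2.2 ∧ ¬ G.Adj t.1 t.2.2 ∧ t.1 ≠ t.2.2) ∧
  (∀ v ∈ V, ∃! t, t ∈ T ∧ (v = t.1 ∨ v = t.2.1 ∨ v = t.2.2))

theorem IsP3Partition.three_mul_card_le {G : SimpleGraph ι} {V : Finset ι}
    {T : Finset (ι × ι × ι)} (hT : IsP3Partition G V T) : 3 * #T ≤ #V := by
  classical
  let verts : ι × ι × ι → Finset ι := fun t => {t.1, t.2.1, t.2.2}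
  have hverts : ∀ t ∈ T, verts t ⊆ V ∧ #(verts t) = 3 := by
    intro t ht
    obtain ⟨h1, h2, h3, hab, hbc, -, hac⟩ := hT.1 t ht
    refine ⟨by simp [verts, insert_subset_iff, h1, h2, h3], ?_⟩
    exact card_eq_three.mpr ⟨_, _, _, G.ne_of_adj hab, hac, G.ne_of_adj hbc, rfl⟩
  have hdisj : (T : Set (ι × ι × ι)).PairwiseDisjoint verts := by
    intro t ht t' ht' hne
    refine disjoint_left.mpr fun v hv hv' => hne ?_
    have hvV : v ∈ V := (hverts t ht).1 hv
    simp only [verts, mem_insert, mem_singleton] at hv hv'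
    exact (hT.2 v hvV).unique ⟨ht, hv⟩ ⟨ht', hv'⟩
  calc 3 * #T = ∑ t ∈ T, #(verts t) := by
        rw [sum_congr rfl fun t ht => (hverts t ht).2, sum_const, smul_eq_mul, mul_comm]
    _ = #(T.biUnion verts) := (card_biUnion hdisj).symm
    _ ≤ #V := card_le_card (biUnion_subset.mpr fun t ht => (hverts t ht).1)

theorem SimpleGraph.IsClique.card_lt_of_cliqueFree {G : SimpleGraph ι} {n : ℕ} {s : Finset ι}
    (hs : G.IsClique (s : Set ι)) (hG : G.CliqueFree n) : #s < n := by
  by_contra! hle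
  obtain ⟨t, hts, htn⟩ := exists_subset_card_eq hle
  exact hG t ⟨hs.subset (coe_subset.mpr hts), htn⟩

end P3Partition

section Signature

open scoped Classical

variable {ι : Type*}

def signature (𝒟 : Finset (Set ι)) (p : ι) : Finset (Set ι) := {D ∈ 𝒟 | p ∈ D}

@[simp]
theorem mem_signature {𝒟 : Finset (Set ι)} {p : ι} {D : Set ι} :
    D ∈ signature 𝒟 p ↔ D ∈ 𝒟 ∧ p ∈ D :=
  mem_filter

theorem signature_subset {𝒟 : Finset (Set ι)} {p : ι} : signature 𝒟 p ⊆ 𝒟 :=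
  filter_subset _ _

def IsIdentifying (𝒟 : Finset (Set ι)) (V : Finset ι) : Prop :=
  (∀ p ∈ V, (signature 𝒟 p).Nonempty) ∧ Set.InjOn (signature 𝒟) V

def lonely (𝒟 : Finset (Set ι)) (V : Finset ι) : Finset ι := {p ∈ V | #(signature 𝒟 p) = 1}

variable {𝒟 : Finset (Set ι)} {V : Finset ι}

theorem sum_card_signature (𝒟 : Finset (Set ι)) (V : Finset ι) :
    ∑ p ∈ V, #(signature 𝒟 p) = ∑ D ∈ 𝒟, #{p ∈ V | p ∈ D} :=
  sum_card_bipartiteAbove_eq_sum_card_bipartiteBelow (· ∈ ·)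

theorem signature_eq_singleton {p : ι} {D : Set ι} (h : #(signature 𝒟 p) = 1) (hD : D ∈ 𝒟)
    (hp : p ∈ D) : signature 𝒟 p = {D} :=
  eq_singleton_iff_unique_mem.mpr ⟨mem_signature.mpr ⟨hD, hp⟩,
    fun _ hE => card_le_one.mp h.le _ hE _ (mem_signature.mpr ⟨hD, hp⟩)⟩

theorem image_signature_lonely_subset :
    (lonely 𝒟 V).image (signature 𝒟) ⊆ 𝒟.image singleton := by
  intro s hs
  obtain ⟨p, hp, rfl⟩ := mem_image.mp hs
  obtain ⟨D, hD⟩ := card_eq_one.mp (mem_filter.mp hp).2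
  have hD𝒟 : D ∈ 𝒟 := (mem_signature.mp (hD ▸ mem_singleton_self D)).1
  exact mem_image.mpr ⟨D, hD𝒟, hD.symm⟩

theorem card_image_signature_lonely (hinj : Set.InjOn (signature 𝒟) V) :
    #((lonely 𝒟 V).image (signature 𝒟)) = #(lonely 𝒟 V) :=
  card_image_of_injOn (hinj.mono (filter_subset _ _))

theorem card_lonely_le (hinj : Set.InjOn (signature 𝒟) V) : #(lonely 𝒟 V) ≤ #𝒟 :=
  calc #(lonely 𝒟 V) = #((lonely 𝒟 V).image (signature 𝒟)) :=
        (card_image_signature_lonely hinj).symm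
    _ ≤ #(𝒟.image singleton) := card_le_card image_signature_lonely_subset
    _ ≤ #𝒟 := card_image_le

theorem exists_signature_eq_singleton (hinj : Set.InjOn (signature 𝒟) V)
    (hcard : #𝒟 ≤ #(lonely 𝒟 V)) {D : Set ι} (hD : D ∈ 𝒟) :
    ∃ l ∈ V, signature 𝒟 l = {D} := by
  have himage : (lonely 𝒟 V).image (signature 𝒟) = 𝒟.image singleton := by
    refine eq_of_subset_of_card_le image_signature_lonely_subset ?_
    rw [card_image_signature_lonely hinj, card_image_of_injective _ singleton_injective]
    exact hcard
  obtain ⟨l, hl, hlD⟩ := mem_image.mp (himage ▸ mem_image_of_mem singleton hD)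
  exact ⟨l, (mem_filter.mp hl).1, hlD⟩

theorem IsIdentifying.tight_of_three_mul_card_le (h : IsIdentifying 𝒟 V)
    (htwo : ∀ D ∈ 𝒟, #{p ∈ V | p ∈ D} ≤ 2) (hcard : 3 * #𝒟 ≤ 2 * #V) :
    (∀ p ∈ V, #(signature 𝒟 p) ≤ 2) ∧ (∀ D ∈ 𝒟, #{p ∈ V | p ∈ D} = 2) ∧
      #(lonely 𝒟 V) = #𝒟 := by
  have hpoint : ∀ p ∈ V, 2 ≤ #(signature 𝒟 p) + if #(signature 𝒟 p) = 1 then 1 else 0 :=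
    fun p hp => by have := (h.1 p hp).card_pos; split_ifs <;> omega
  have hsum : ∑ p ∈ V, (#(signature 𝒟 p) + if #(signature 𝒟 p) = 1 then 1 else 0) =
      ∑ D ∈ 𝒟, #{p ∈ V | p ∈ D} + #(lonely 𝒟 V) := by
    rw [sum_add_distrib, sum_card_signature, lonely, card_filter]
  have hlow : ∑ p ∈ V, 2 ≤ _ := sum_le_sum hpoint
  have hup : ∑ D ∈ 𝒟, #{p ∈ V | p ∈ D} ≤ ∑ D ∈ 𝒟, 2 := sum_le_sum htwo
  have hlonely := card_lonely_le h.2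
  simp only [sum_const, smul_eq_mul] at hlow hup
  refine ⟨fun p hp => ?_, fun D hD => ?_, by omega⟩
  · have := (sum_eq_sum_iff_of_le hpoint).mp (by rw [sum_const, smul_eq_mul]; omega) p hp
    split_ifs at this <;> omega
  · exact (sum_eq_sum_iff_of_le htwo).mp (by rw [sum_const, smul_eq_mul]; omega) D hD

theorem existsUnique_card_signature_eq_two (h : IsIdentifying 𝒟 V)
    (hle : ∀ p ∈ V, #(signature 𝒟 p) ≤ 2)
    {D : Set ι} (hD : #{p ∈ V | p ∈ D} = 2) {l : ι} (hl : l ∈ V) (hlD : signature 𝒟 l = {D}) :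
    ∃! m, m ∈ V ∧ m ∈ D ∧ #(signature 𝒟 m) = 2 := by
  have hD𝒟 : D ∈ 𝒟 ∧ l ∈ D := mem_signature.mp (hlD ▸ mem_singleton_self D)
  have hbranch : {p ∈ V | p ∈ D ∧ #(signature 𝒟 p) = 2} = {p ∈ V | p ∈ D}.erase l := by
    ext p
    simp only [mem_filter, mem_erase]
    constructor
    · rintro ⟨hp, hpD, hp2⟩
      exact ⟨by rintro rfl; simp [hlD] at hp2, hp, hpD⟩
    · rintro ⟨hpl, hp, hpD⟩
      refine ⟨hp, hpD, ?_⟩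
      have := (h.1 p hp).card_pos
      have := hle p hp
      by_contra hp2
      exact hpl (h.2 hp hl ((signature_eq_singleton (by omega) hD𝒟.1 hpD).trans hlD.symm))
  obtain ⟨m, hm⟩ : ∃ m, {p ∈ V | p ∈ D ∧ #(signature 𝒟 p) = 2} = {m} := by
    rw [← card_eq_one, hbranch, card_erase_of_mem (mem_filter.mpr ⟨hl, hD𝒟.2⟩), hD]
  refine ⟨m, (mem_filter.mp (hm ▸ mem_singleton_self m)).elim fun hm hm' => ⟨hm, hm'⟩, ?_⟩
  rintro p ⟨hp, hpD, hp2⟩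
  exact mem_singleton.mp (hm ▸ mem_filter.mpr ⟨hp, hpD, hp2⟩)

end Signature

section BranchPaths

open scoped Classical

variable {ι : Type*} {𝒟 : Finset (Set ι)} {V : Finset ι} {D₁ D₂ : ι → Set ι}

/-- The path through a branch point `m` runs from the lonely point of `D₁ m` to that of `D₂ m`,
where `D₁ m`, `D₂ m` enumerate the signature of `m`. -/
def branchPaths (𝒟 : Finset (Set ι)) (V : Finset ι) (D₁ D₂ : ι → Set ι) : Finset (ι × ι × ι) :=
  {t ∈ V ×ˢ V ×ˢ V | #(signature 𝒟 t.2.1) = 2 ∧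
    signature 𝒟 t.1 = {D₁ t.2.1} ∧ signature 𝒟 t.2.2 = {D₂ t.2.1}}

theorem mem_branchPaths {t : ι × ι × ι} :
    t ∈ branchPaths 𝒟 V D₁ D₂ ↔ (t.1 ∈ V ∧ t.2.1 ∈ V ∧ t.2.2 ∈ V) ∧
      #(signature 𝒟 t.2.1) = 2 ∧ signature 𝒟 t.1 = {D₁ t.2.1} ∧
        signature 𝒟 t.2.2 = {D₂ t.2.1} := by
  simp only [branchPaths, mem_filter, mem_product]

theorem eq_of_mem_branchPaths (hinj : Set.InjOn (signature 𝒟) V) {t t' : ι × ι × ι}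
    (ht : t ∈ branchPaths 𝒟 V D₁ D₂) (ht' : t' ∈ branchPaths 𝒟 V D₁ D₂)
    (hmid : t.2.1 = t'.2.1) : t = t' := by
  obtain ⟨⟨h1, -, h3⟩, -, hs1, hs3⟩ := mem_branchPaths.mp ht
  obtain ⟨⟨h1', -, h3'⟩, -, hs1', hs3'⟩ := mem_branchPaths.mp ht'
  refine Prod.ext (hinj h1 h1' ?_) (Prod.ext hmid (hinj h3 h3' ?_))
  · rw [hs1, hs1', hmid]
  · rw [hs3, hs3', hmid]

theorem exists_mem_branchPaths
    (hlonely : ∀ D ∈ 𝒟, ∃ l ∈ V, signature 𝒟 l = {D})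
    (hD : ∀ m, #(signature 𝒟 m) = 2 → D₁ m ≠ D₂ m ∧ signature 𝒟 m = {D₁ m, D₂ m})
    {m : ι} (hm : m ∈ V) (hm2 : #(signature 𝒟 m) = 2) :
    ∃ t ∈ branchPaths 𝒟 V D₁ D₂, t.2.1 = m := by
  have hsig := (hD m hm2).2
  obtain ⟨l₁, hl₁, hs₁⟩ := hlonely (D₁ m) (signature_subset (p := m) (by rw [hsig]; simp))
  obtain ⟨l₂, hl₂, hs₂⟩ := hlonely (D₂ m) (signature_subset (p := m) (by rw [hsig]; simp))
  exact ⟨(l₁, m, l₂), mem_branchPaths.mpr ⟨⟨hl₁, hm, hl₂⟩, hm2, hs₁, hs₂⟩, rfl⟩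

theorem eq_or_signature_eq_singleton_of_mem_branchPaths
    (hD : ∀ m, #(signature 𝒟 m) = 2 → D₁ m ≠ D₂ m ∧ signature 𝒟 m = {D₁ m, D₂ m})
    {t : ι × ι × ι} (ht : t ∈ branchPaths 𝒟 V D₁ D₂) {v : ι}
    (hv : v = t.1 ∨ v = t.2.1 ∨ v = t.2.2) :
    v = t.2.1 ∨ ∃ D, signature 𝒟 v = {D} ∧ D ∈ signature 𝒟 t.2.1 := by
  obtain ⟨-, hm2, hs1, hs3⟩ := mem_branchPaths.mp ht
  have hsig := (hD _ hm2).2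
  rcases hv with rfl | rfl | rfl
  · exact Or.inr ⟨_, hs1, by simp [hsig]⟩
  · exact Or.inl rfl
  · exact Or.inr ⟨_, hs3, by simp [hsig]⟩

theorem middle_eq_of_mem_branchPaths
    (hbranch : ∀ D ∈ 𝒟, ∃! m, m ∈ V ∧ m ∈ D ∧ #(signature 𝒟 m) = 2)
    (hD : ∀ m, #(signature 𝒟 m) = 2 → D₁ m ≠ D₂ m ∧ signature 𝒟 m = {D₁ m, D₂ m})
    {t t' : ι × ι × ι} (ht : t ∈ branchPaths 𝒟 V D₁ D₂) (ht' : t' ∈ branchPaths 𝒟 V D₁ D₂)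
    {v : ι} (hv : v = t.1 ∨ v = t.2.1 ∨ v = t.2.2) (hv' : v = t'.1 ∨ v = t'.2.1 ∨ v = t'.2.2) :
    t.2.1 = t'.2.1 := by
  obtain ⟨⟨-, hm, -⟩, hm2, -⟩ := mem_branchPaths.mp ht
  obtain ⟨⟨-, hm', -⟩, hm2', -⟩ := mem_branchPaths.mp ht'
  rcases eq_or_signature_eq_singleton_of_mem_branchPaths hD ht hv with h | ⟨D, hvD, hDm⟩ <;>
    rcases eq_or_signature_eq_singleton_of_mem_branchPaths hD ht' hv' with h' | ⟨D', hvD', hDm'⟩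
  · exact h.symm.trans h'
  · simp [← h, hvD'] at hm2
  · simp [← h', hvD] at hm2'
  · obtain rfl : D = D' := singleton_injective (hvD.symm.trans hvD')
    obtain ⟨hD𝒟, hmD⟩ := mem_signature.mp hDm
    exact (hbranch D hD𝒟).unique ⟨hm, hmD, hm2⟩ ⟨hm', (mem_signature.mp hDm').2, hm2'⟩

theorem exists_mem_branchPaths_of_mem (hinj : Set.InjOn (signature 𝒟) V)
    (hsig : ∀ p ∈ V, #(signature 𝒟 p) = 1 ∨ #(signature 𝒟 p) = 2)
    (hlonely : ∀ D ∈ 𝒟, ∃ l ∈ V, signature 𝒟 l = {D})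
    (hbranch : ∀ D ∈ 𝒟, ∃! m, m ∈ V ∧ m ∈ D ∧ #(signature 𝒟 m) = 2)
    (hD : ∀ m, #(signature 𝒟 m) = 2 → D₁ m ≠ D₂ m ∧ signature 𝒟 m = {D₁ m, D₂ m})
    {v : ι} (hv : v ∈ V) :
    ∃ t ∈ branchPaths 𝒟 V D₁ D₂, v = t.1 ∨ v = t.2.1 ∨ v = t.2.2 := by
  rcases hsig v hv with hv1 | hv2
  · obtain ⟨D, hvD⟩ := card_eq_one.mp hv1
    obtain ⟨hD𝒟, -⟩ := mem_signature.mp (hvD ▸ mem_singleton_self D)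
    obtain ⟨m, ⟨hm, hmD, hm2⟩, -⟩ := hbranch D hD𝒟
    obtain ⟨t, ht, rfl⟩ := exists_mem_branchPaths hlonely hD hm hm2
    obtain ⟨⟨h1, -, h3⟩, -, hs1, hs3⟩ := mem_branchPaths.mp ht
    have hDm : D ∈ ({D₁ t.2.1, D₂ t.2.1} : Finset (Set ι)) :=
      (hD _ hm2).2 ▸ mem_signature.mpr ⟨hD𝒟, hmD⟩
    refine ⟨t, ht, ?_⟩
    rcases mem_insert.mp hDm with rfl | hDm
    · exact Or.inl (hinj hv h1 (hvD.trans hs1.symm))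
    · exact Or.inr (Or.inr (hinj hv h3 (hvD.trans (mem_singleton.mp hDm ▸ hs3.symm))))
  · obtain ⟨t, ht, rfl⟩ := exists_mem_branchPaths hlonely hD hv hv2
    exact ⟨t, ht, Or.inr (Or.inl rfl)⟩

theorem isP3Partition_branchPaths {G : SimpleGraph ι} (hinj : Set.InjOn (signature 𝒟) V)
    (hsig : ∀ p ∈ V, #(signature 𝒟 p) = 1 ∨ #(signature 𝒟 p) = 2)
    (hlonely : ∀ D ∈ 𝒟, ∃ l ∈ V, signature 𝒟 l = {D})
    (hbranch : ∀ D ∈ 𝒟, ∃! m, m ∈ V ∧ m ∈ D ∧ #(signature 𝒟 m) = 2)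
    (hD : ∀ m, #(signature 𝒟 m) = 2 → D₁ m ≠ D₂ m ∧ signature 𝒟 m = {D₁ m, D₂ m})
    (hclique : ∀ D ∈ 𝒟, G.IsClique D) (htri : G.CliqueFree 3) :
    IsP3Partition G V (branchPaths 𝒟 V D₁ D₂) := by
  refine ⟨fun t ht => ?_, fun v hv => ?_⟩
  · obtain ⟨⟨h1, hm, h3⟩, hm2, hs1, hs3⟩ := mem_branchPaths.mp ht
    obtain ⟨hne, hsig⟩ := hD _ hm2
    have hD₁ : D₁ t.2.1 ∈ signature 𝒟 t.2.1 := by simp [hsig]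
    have hD₂ : D₂ t.2.1 ∈ signature 𝒟 t.2.1 := by simp [hsig]
    have h1D : t.1 ∈ D₁ t.2.1 := (mem_signature.mp (hs1 ▸ mem_singleton_self _)).2
    have h3D : t.2.2 ∈ D₂ t.2.1 := (mem_signature.mp (hs3 ▸ mem_singleton_self _)).2
    have h1m : t.1 ≠ t.2.1 := fun h => by simp [← h, hs1] at hm2
    have h3m : t.2.2 ≠ t.2.1 := fun h => by simp [← h, hs3] at hm2
    have h13 : t.1 ≠ t.2.2 := fun h => hne (singleton_injective (hs1.symm.trans (h ▸ hs3)))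
    have hadj₁ : G.Adj t.1 t.2.1 :=
      hclique _ (mem_signature.mp hD₁).1 h1D (mem_signature.mp hD₁).2 h1m
    have hadj₂ : G.Adj t.2.1 t.2.2 :=
      hclique _ (mem_signature.mp hD₂).1 (mem_signature.mp hD₂).2 h3D h3m.symm
    exact ⟨h1, hm, h3, hadj₁, hadj₂,
      SimpleGraph.isIndepSet_neighborSet_of_triangleFree _ htri _ hadj₁.symm hadj₂ h13, h13⟩
  · obtain ⟨t, ht, hvt⟩ := exists_mem_branchPaths_of_mem hinj hsig hlonely hbranch hD hv
    refine ⟨t, ⟨ht, hvt⟩, fun t' ⟨ht', hvt'⟩ => eq_of_mem_branchPaths hinj ht' ht ?_⟩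
    exact middle_eq_of_mem_branchPaths hbranch hD ht' ht hvt' hvt

theorem IsIdentifying.exists_isP3Partition {G : SimpleGraph ι} (h : IsIdentifying 𝒟 V)
    (hclique : ∀ D ∈ 𝒟, G.IsClique D) (htri : G.CliqueFree 3) (hcard : 3 * #𝒟 ≤ 2 * #V) :
    ∃ T, IsP3Partition G V T := by
  have htwo : ∀ D ∈ 𝒟, #{p ∈ V | p ∈ D} ≤ 2 := fun D hD => Nat.lt_succ_iff.mp <|
    ((hclique D hD).subset fun p hp => (mem_filter.mp hp).2).card_lt_of_cliqueFree htri
  obtain ⟨hle, hdisk, hlonely⟩ := h.tight_of_three_mul_card_le htwo hcard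
  have hsig : ∀ p ∈ V, #(signature 𝒟 p) = 1 ∨ #(signature 𝒟 p) = 2 := fun p hp => by
    have := (h.1 p hp).card_pos
    have := hle p hp
    omega
  have hsurj : ∀ D ∈ 𝒟, ∃ l ∈ V, signature 𝒟 l = {D} :=
    fun D hD => exists_signature_eq_singleton h.2 hlonely.ge hD
  have hbranch : ∀ D ∈ 𝒟, ∃! m, m ∈ V ∧ m ∈ D ∧ #(signature 𝒟 m) = 2 := fun D hD => by
    obtain ⟨l, hl, hlD⟩ := hsurj D hD
    exact existsUnique_card_signature_eq_two h hle (hdisk D hD) hl hlD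
  have hpair : ∀ m, ∃ D₁ D₂ : Set ι,
      #(signature 𝒟 m) = 2 → D₁ ≠ D₂ ∧ signature 𝒟 m = {D₁, D₂} := fun m => by
    by_cases hm : #(signature 𝒟 m) = 2
    · obtain ⟨D₁, D₂, hD⟩ := card_eq_two.mp hm
      exact ⟨D₁, D₂, fun _ => hD⟩
    · exact ⟨∅, ∅, fun h => absurd h hm⟩
  choose D₁ D₂ hD using hpair
  exact ⟨_, isP3Partition_branchPaths h.2 hsig hsurj hbranch hD hclique htri⟩

end BranchPaths

section Grid

open scoped Classical

def gridGraph : SimpleGraph (ℤ × ℤ) where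
  Adj := GridAdj
  symm := ⟨fun a b (h : GridAdj a b) => show GridAdj b a by
    unfold GridAdj at *; linear_combination h⟩
  loopless := ⟨fun a (h : GridAdj a a) => by simp [GridAdj] at h⟩

theorem Identifies.isIdentifying_preimage {ι : Type*} {f : ι → Pt} (hf : Function.Injective f)
    {𝒟 : Finset (Set Pt)} {V : Finset ι} (h : Identifies 𝒟 (V.image f)) :
    IsIdentifying (𝒟.image (f ⁻¹' ·)) V := by
  refine ⟨fun p hp => ?_, fun u hu v hv huv => ?_⟩
  · obtain ⟨D, hD, hpD⟩ := h.1 (f p) (mem_image_of_mem f hp)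
    exact ⟨f ⁻¹' D, mem_signature.mpr ⟨mem_image_of_mem _ hD, hpD⟩⟩
  · by_contra hne
    obtain ⟨D, hD, hsep⟩ :=
      h.2 (f u) (mem_image_of_mem f hu) (f v) (mem_image_of_mem f hv) (hf.ne hne)
    have hmem : ∀ w, f ⁻¹' D ∈ signature (𝒟.image (f ⁻¹' ·)) w ↔ f w ∈ D := fun w => by
      rw [mem_signature, Set.mem_preimage, and_iff_right (mem_image_of_mem _ hD)]
    have : f u ∈ D ↔ f v ∈ D := by rw [← hmem, huv, hmem]
    tauto

theorem embZ_injective : Function.Injective embZ := by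
  intro a b h
  have h0 := congrArg (· 0) h
  have h1 := congrArg (· 1) h
  simp only [embZ, PiLp.toLp_apply, Matrix.cons_val_zero, Matrix.cons_val_one,
    Int.cast_inj] at h0 h1
  exact Prod.ext h0 h1

theorem dist_embZ_sq (a b : ℤ × ℤ) :
    dist (embZ a) (embZ b) ^ 2 = (((a.1 - b.1) ^ 2 + (a.2 - b.2) ^ 2 : ℤ) : ℝ) := by
  rw [EuclideanSpace.dist_eq, Real.sq_sqrt (by positivity)]
  simp [embZ, Fin.sum_univ_two, Real.dist_eq, sq_abs]

theorem dist_embZ_of_gridAdj {a b : ℤ × ℤ} (h : GridAdj a b) : dist (embZ a) (embZ b) = 1 := by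
  have hsq : dist (embZ a) (embZ b) ^ 2 = 1 := by rw [dist_embZ_sq]; exact_mod_cast h
  nlinarith [dist_nonneg (x := embZ a) (y := embZ b)]

theorem gridAdj_of_dist_le_one {a b : ℤ × ℤ} (hab : a ≠ b) (h : dist (embZ a) (embZ b) ≤ 1) :
    GridAdj a b := by
  have hsq : dist (embZ a) (embZ b) ^ 2 ≤ 1 := by
    nlinarith [dist_nonneg (x := embZ a) (y := embZ b)]
  rw [dist_embZ_sq] at hsq
  have hle : (a.1 - b.1) ^ 2 + (a.2 - b.2) ^ 2 ≤ 1 := by exact_mod_cast hsq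
  have hne : (a.1 - b.1) ^ 2 + (a.2 - b.2) ^ 2 ≠ 0 := fun h0 =>
    hab (Prod.ext (by nlinarith [sq_nonneg (a.1 - b.1), sq_nonneg (a.2 - b.2)])
      (by nlinarith [sq_nonneg (a.1 - b.1), sq_nonneg (a.2 - b.2)]))
  unfold GridAdj
  have := sq_nonneg (a.1 - b.1)
  have := sq_nonneg (a.2 - b.2)
  omega

theorem gridGraph_isClique_preimage_closedBall (c : Pt) :
    gridGraph.IsClique (embZ ⁻¹' closedBall c (1 / 2)) := by
  intro a ha b hb hab
  refine gridAdj_of_dist_le_one hab ?_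
  calc dist (embZ a) (embZ b) ≤ dist (embZ a) c + dist (embZ b) c := dist_triangle_right _ _ _
    _ ≤ 1 / 2 + 1 / 2 := add_le_add ha hb
    _ = 1 := by norm_num

theorem gridGraph_cliqueFree_three : gridGraph.CliqueFree 3 := by
  intro s hs
  obtain ⟨a, b, c, hab, hac, hbc, -⟩ := SimpleGraph.is3Clique_iff.mp hs
  change GridAdj a b at hab
  change GridAdj a c at hac
  change GridAdj b c at hbc
  unfold GridAdj at hab hac hbc
  -- parity: `1 = |a - c|² = |a - b|² + |b - c|² + 2⟨a - b, b - c⟩ = 2 + 2k`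
  have key : (a.1 - c.1) ^ 2 + (a.2 - c.2) ^ 2 =
      ((a.1 - b.1) ^ 2 + (a.2 - b.2) ^ 2) + ((b.1 - c.1) ^ 2 + (b.2 - c.2) ^ 2) +
        2 * ((a.1 - b.1) * (b.1 - c.1) + (a.2 - b.2) * (b.2 - c.2)) := by ring
  omega

def edgeDisk (a b : ℤ × ℤ) : Set Pt := closedBall (midpoint ℝ (embZ a) (embZ b)) (1 / 2)

theorem embZ_mem_edgeDisk_iff {a b p : ℤ × ℤ} (h : GridAdj a b) :
    embZ p ∈ edgeDisk a b ↔ p = a ∨ p = b := by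
  have hd := dist_embZ_of_gridAdj h
  have ha : embZ a ∈ edgeDisk a b := by
    rw [edgeDisk, mem_closedBall, dist_left_midpoint, hd]; norm_num
  have hb : embZ b ∈ edgeDisk a b := by
    rw [edgeDisk, mem_closedBall, dist_right_midpoint, hd]; norm_num
  refine ⟨fun hp => ?_, by rintro (rfl | rfl) <;> assumption⟩
  by_contra! hne
  have hclique := gridGraph_isClique_preimage_closedBall (midpoint ℝ (embZ a) (embZ b))
  exact gridGraph_cliqueFree_three {p, a, b} (SimpleGraph.is3Clique_triple_iff.mpr
    ⟨hclique hp ha hne.1, hclique hp hb hne.2, h⟩)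

theorem exists_edgeDisk_separating {a b c u v : ℤ × ℤ} (hab : GridAdj a b) (hbc : GridAdj b c)
    (hac : a ≠ c) (hu : u = a ∨ u = b ∨ u = c) (huv : u ≠ v) :
    ∃ D ∈ ({edgeDisk a b, edgeDisk b c} : Set (Set Pt)),
      (embZ u ∈ D ∧ embZ v ∉ D) ∨ (embZ v ∈ D ∧ embZ u ∉ D) := by
  have hab' := gridGraph.ne_of_adj hab
  have hbc' := gridGraph.ne_of_adj hbc
  simp only [Set.mem_insert_iff, Set.mem_singleton_iff, exists_eq_or_imp, exists_eq_left,
    embZ_mem_edgeDisk_iff hab, embZ_mem_edgeDisk_iff hbc]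
  grind

theorem IsP3Partition.exists_identifies {V : Finset (ℤ × ℤ)}
    {T : Finset ((ℤ × ℤ) × (ℤ × ℤ) × (ℤ × ℤ))} (hT : IsP3Partition gridGraph V T) :
    ∃ 𝒟 : Finset (Set Pt), (∀ D ∈ 𝒟, ∃ c : Pt, D = closedBall c (1 / 2)) ∧
      Identifies 𝒟 (V.image embZ) ∧ 3 * #𝒟 ≤ 2 * #V := by
  let 𝒟 := T.image (fun t => edgeDisk t.1 t.2.1) ∪ T.image (fun t => edgeDisk t.2.1 t.2.2)
  have hmem : ∀ t ∈ T, ∀ D ∈ ({edgeDisk t.1 t.2.1, edgeDisk t.2.1 t.2.2} : Set (Set Pt)),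
      D ∈ 𝒟 := by
    rintro t ht D (rfl | rfl)
    exacts [mem_union_left _ (mem_image_of_mem _ ht), mem_union_right _ (mem_image_of_mem _ ht)]
  refine ⟨𝒟, ?_, ⟨?_, ?_⟩, ?_⟩
  · intro D hD
    rcases mem_union.mp hD with hD | hD <;> obtain ⟨t, -, rfl⟩ := mem_image.mp hD <;> exact ⟨_, rfl⟩
  · simp only [mem_image, forall_exists_index, and_imp, forall_apply_eq_imp_iff₂]
    intro u hu
    obtain ⟨t, ⟨ht, hut⟩, -⟩ := hT.2 u hu
    obtain ⟨-, -, -, hab, hbc, -⟩ := hT.1 t ht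
    rcases hut with rfl | rfl | rfl
    · exact ⟨_, hmem t ht _ (Or.inl rfl), (embZ_mem_edgeDisk_iff hab).mpr (Or.inl rfl)⟩
    · exact ⟨_, hmem t ht _ (Or.inl rfl), (embZ_mem_edgeDisk_iff hab).mpr (Or.inr rfl)⟩
    · exact ⟨_, hmem t ht _ (Or.inr rfl), (embZ_mem_edgeDisk_iff hbc).mpr (Or.inr rfl)⟩
  · simp only [mem_image, forall_exists_index, and_imp, forall_apply_eq_imp_iff₂]
    intro u hu v _ huv
    obtain ⟨t, ⟨ht, hut⟩, -⟩ := hT.2 u hu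
    obtain ⟨-, -, -, hab, hbc, -, hac⟩ := hT.1 t ht
    obtain ⟨D, hD, hsep⟩ := exists_edgeDisk_separating hab hbc hac hut (fun h => huv (h ▸ rfl))
    exact ⟨D, hmem t ht D hD, hsep⟩
  · have h𝒟 : #𝒟 ≤ 2 * #T := calc
      #𝒟 ≤ #(T.image fun t => edgeDisk t.1 t.2.1) + #(T.image fun t => edgeDisk t.2.1 t.2.2) :=
        card_union_le _ _
      _ ≤ #T + #T := add_le_add card_image_le card_image_le
      _ = 2 * #T := (two_mul _).symm
    have := hT.three_mul_card_le
    omega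

theorem exists_isP3Partition_of_identifies {V : Finset (ℤ × ℤ)} {𝒟 : Finset (Set Pt)}
    (hball : ∀ D ∈ 𝒟, ∃ c : Pt, D = closedBall c (1 / 2)) (h : Identifies 𝒟 (V.image embZ))
    (hcard : 3 * #𝒟 ≤ 2 * #V) : ∃ T, IsP3Partition gridGraph V T := by
  refine (h.isIdentifying_preimage embZ_injective).exists_isP3Partition ?_
    gridGraph_cliqueFree_three ((Nat.mul_le_mul_left 3 card_image_le).trans hcard)
  intro B hB
  obtain ⟨D, hD, rfl⟩ := mem_image.mp hB
  obtain ⟨c, rfl⟩ := hball D hD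
  exact gridGraph_isClique_preimage_closedBall c

end Grid

/-- A grid graph admits a partition into induced paths on three vertices iff its vertex
set can be identified by `2n/3` disks of radius `1/2`. -/
theorem P3_partition_iff_identification (V : Finset (ℤ × ℤ)) :
    (∃ T : Finset ((ℤ × ℤ) × (ℤ × ℤ) × (ℤ × ℤ)),
      (∀ t ∈ T, t.1 ∈ V ∧ t.2.1 ∈ V ∧ t.2.2 ∈ V ∧
        GridAdj t.1 t.2.1 ∧ GridAdj t.2.1 t.2.2 ∧ ¬ GridAdj t.1 t.2.2 ∧ t.1 ≠ t.2.2) ∧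
      (∀ v ∈ V, ∃! t, t ∈ T ∧ (v = t.1 ∨ v = t.2.1 ∨ v = t.2.2))) ↔
    (∃ 𝒟 : Finset (Set Pt),
      (∀ D ∈ 𝒟, ∃ c : Pt, D = Metric.closedBall c (1 / 2)) ∧
      Identifies 𝒟 (V.image embZ) ∧ 3 * 𝒟.card ≤ 2 * V.card) :=
  ⟨fun ⟨T, hT⟩ => IsP3Partition.exists_identifies (T := T) hT,
    fun ⟨_, hball, h, hcard⟩ => exists_isP3Partition_of_identifies hball h hcard⟩
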